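/- If a polynomial f ∈ ℤ[X₁,Y₁,X₂,Y₂] satisfies f(X₁,Y₁,X₂,Y₂) = f(X₂,Y₂,X₁,Y₁) (i.e., f is invariant under simultaneously swapping X₁ with X₂ and Y₁ with Y₂), then the image of f in the rational function field ℂ(X₁,Y₁,X₂,Y₂) lies in the subring generated by u₂, u₄, u₅, u₇ (the smallest subring of the field containing these four elements). -/
import Mathlib


/- Context: K = ℂ(X₁,Y₁,X₂,Y₂), the fraction field of the polynomial ring in four
variables (variables indexed 0 ↦ X₁, 1 ↦ Y₁, 2 ↦ X₂, 3 ↦ Y₂);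
u₂ = (X₁+X₂)/2, u₄ = (X₁−X₂)²/4, u₅ = (Y₁−Y₂)/(X₁−X₂), u₇ = (Y₁+Y₂)/2.
The swap automorphism exchanges X₁ ↔ X₂ and Y₁ ↔ Y₂. -/

noncomputable section

abbrev K : Type := FractionRing (MvPolynomial (Fin 4) ℂ)

def X1 : K := algebraMap (MvPolynomial (Fin 4) ℂ) K (MvPolynomial.X 0)
def Y1 : K := algebraMap (MvPolynomial (Fin 4) ℂ) K (MvPolynomial.X 1)
def X2 : K := algebraMap (MvPolynomial (Fin 4) ℂ) K (MvPolynomial.X 2)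
def Y2 : K := algebraMap (MvPolynomial (Fin 4) ℂ) K (MvPolynomial.X 3)

def u2 : K := (X1 + X2) / 2
def u4 : K := (X1 - X2) ^ 2 / 4
def u5 : K := (Y1 - Y2) / (X1 - X2)
def u7 : K := (Y1 + Y2) / 2

/-- The map on variables induced by swapping X₁ ↔ X₂ and Y₁ ↔ Y₂. -/
def swapFun : Fin 4 → Fin 4 := ![2, 3, 0, 1]

/-! ### Auxiliary material for the proof -/

open MvPolynomial

/-- The integral polynomial ring. -/
abbrev Paux : Type := MvPolynomial (Fin 4) ℤ

/-- Generators of the invariant ring over ℤ. -/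
def gensAux : Set Paux := {X 0 + X 2, X 0 * X 2, X 1 + X 3, X 1 * X 3, X 0 * X 1 + X 2 * X 3}

abbrev SZ : Subring Paux := Subring.closure gensAux

lemma mem_a : X 0 + X 2 ∈ SZ := Subring.subset_closure (by simp [gensAux])
lemma mem_b : X 0 * X 2 ∈ SZ := Subring.subset_closure (by simp [gensAux])
lemma mem_c : X 1 + X 3 ∈ SZ := Subring.subset_closure (by simp [gensAux])
lemma mem_d : X 1 * X 3 ∈ SZ := Subring.subset_closure (by simp [gensAux])
lemma mem_e : X 0 * X 1 + X 2 * X 3 ∈ SZ := Subring.subset_closure (by simp [gensAux])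

lemma twoStep {p : ℕ → Prop} (h0 : p 0) (h1 : p 1)
    (hrec : ∀ q, p q → p (q + 1) → p (q + 2)) : ∀ q, p q := by
  have h : ∀ q, p q ∧ p (q + 1) := by
    intro q
    induction q with
    | zero => exact ⟨h0, h1⟩
    | succ q ih => exact ⟨ih.2, hrec q ih.1 ih.2⟩
  exact fun q => (h q).1

lemma mem_two : ((2 : Paux)) ∈ SZ := by
  have : (2 : Paux) = ((2 : ℤ) : Paux) := by push_cast; ring
  rw [this]; exact intCast_mem SZ 2

lemma L1 (q : ℕ) : (X 1 : Paux) ^ q + X 3 ^ q ∈ SZ := by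
  refine twoStep (p := fun q => (X 1 : Paux) ^ q + X 3 ^ q ∈ SZ) ?_ ?_ ?_ q
  · have : (X 1 : Paux) ^ 0 + X 3 ^ 0 = 2 := by ring
    simp only [this]; exact mem_two
  · have : (X 1 : Paux) ^ 1 + X 3 ^ 1 = X 1 + X 3 := by ring
    simp only [this]; exact mem_c
  · intro q h1 h2
    have : (X 1 : Paux) ^ (q+2) + X 3 ^ (q+2)
        = (X 1 + X 3) * (X 1 ^ (q+1) + X 3 ^ (q+1)) - (X 1 * X 3) * (X 1 ^ q + X 3 ^ q) := by
      ring
    simp only [this]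
    exact SZ.sub_mem (SZ.mul_mem mem_c h2) (SZ.mul_mem mem_d h1)

lemma L2 (q : ℕ) : (X 0 : Paux) * X 1 ^ q + X 2 * X 3 ^ q ∈ SZ := by
  refine twoStep (p := fun q => (X 0 : Paux) * X 1 ^ q + X 2 * X 3 ^ q ∈ SZ) ?_ ?_ ?_ q
  · have : (X 0 : Paux) * X 1 ^ 0 + X 2 * X 3 ^ 0 = X 0 + X 2 := by ring
    simp only [this]; exact mem_a
  · have : (X 0 : Paux) * X 1 ^ 1 + X 2 * X 3 ^ 1 = X 0 * X 1 + X 2 * X 3 := by ring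
    simp only [this]; exact mem_e
  · intro q h1 h2
    have : (X 0 : Paux) * X 1 ^ (q+2) + X 2 * X 3 ^ (q+2)
        = (X 1 + X 3) * (X 0 * X 1 ^ (q+1) + X 2 * X 3 ^ (q+1))
          - (X 1 * X 3) * (X 0 * X 1 ^ q + X 2 * X 3 ^ q) := by ring
    simp only [this]
    exact SZ.sub_mem (SZ.mul_mem mem_c h2) (SZ.mul_mem mem_d h1)

lemma L3 (q : ℕ) : (X 0 : Paux) * X 3 ^ q + X 2 * X 1 ^ q ∈ SZ := by
  refine twoStep (p := fun q => (X 0 : Paux) * X 3 ^ q + X 2 * X 1 ^ q ∈ SZ) ?_ ?_ ?_ q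
  · have : (X 0 : Paux) * X 3 ^ 0 + X 2 * X 1 ^ 0 = X 0 + X 2 := by ring
    simp only [this]; exact mem_a
  · have : (X 0 : Paux) * X 3 ^ 1 + X 2 * X 1 ^ 1
        = (X 0 + X 2) * (X 1 + X 3) - (X 0 * X 1 + X 2 * X 3) := by ring
    simp only [this]; exact SZ.sub_mem (SZ.mul_mem mem_a mem_c) mem_e
  · intro q h1 h2
    have : (X 0 : Paux) * X 3 ^ (q+2) + X 2 * X 1 ^ (q+2)
        = (X 1 + X 3) * (X 0 * X 3 ^ (q+1) + X 2 * X 1 ^ (q+1))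
          - (X 1 * X 3) * (X 0 * X 3 ^ q + X 2 * X 1 ^ q) := by ring
    simp only [this]
    exact SZ.sub_mem (SZ.mul_mem mem_c h2) (SZ.mul_mem mem_d h1)

lemma L4 (p q : ℕ) : (X 0 : Paux) ^ p * X 1 ^ q + X 2 ^ p * X 3 ^ q ∈ SZ := by
  refine twoStep (p := fun p => ∀ q, (X 0 : Paux) ^ p * X 1 ^ q + X 2 ^ p * X 3 ^ q ∈ SZ)
    ?_ ?_ ?_ p q
  · intro q
    have : (X 0 : Paux) ^ 0 * X 1 ^ q + X 2 ^ 0 * X 3 ^ q = X 1 ^ q + X 3 ^ q := by ring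
    simp only [this]; exact L1 q
  · intro q
    have : (X 0 : Paux) ^ 1 * X 1 ^ q + X 2 ^ 1 * X 3 ^ q = X 0 * X 1 ^ q + X 2 * X 3 ^ q := by
      ring
    simp only [this]; exact L2 q
  · intro p h1 h2 q
    have : (X 0 : Paux) ^ (p+2) * X 1 ^ q + X 2 ^ (p+2) * X 3 ^ q
        = (X 0 + X 2) * (X 0 ^ (p+1) * X 1 ^ q + X 2 ^ (p+1) * X 3 ^ q)
          - (X 0 * X 2) * (X 0 ^ p * X 1 ^ q + X 2 ^ p * X 3 ^ q) := by ring
    simp only [this]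
    exact SZ.sub_mem (SZ.mul_mem mem_a (h2 q)) (SZ.mul_mem mem_b (h1 q))

lemma L5 (p s : ℕ) : (X 0 : Paux) ^ p * X 3 ^ s + X 2 ^ p * X 1 ^ s ∈ SZ := by
  refine twoStep (p := fun p => ∀ s, (X 0 : Paux) ^ p * X 3 ^ s + X 2 ^ p * X 1 ^ s ∈ SZ)
    ?_ ?_ ?_ p s
  · intro s
    have : (X 0 : Paux) ^ 0 * X 3 ^ s + X 2 ^ 0 * X 1 ^ s = X 1 ^ s + X 3 ^ s := by ring
    simp only [this]; exact L1 s
  · intro s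
    have : (X 0 : Paux) ^ 1 * X 3 ^ s + X 2 ^ 1 * X 1 ^ s = X 0 * X 3 ^ s + X 2 * X 1 ^ s := by
      ring
    simp only [this]; exact L3 s
  · intro p h1 h2 s
    have : (X 0 : Paux) ^ (p+2) * X 3 ^ s + X 2 ^ (p+2) * X 1 ^ s
        = (X 0 + X 2) * (X 0 ^ (p+1) * X 3 ^ s + X 2 ^ (p+1) * X 1 ^ s)
          - (X 0 * X 2) * (X 0 ^ p * X 3 ^ s + X 2 ^ p * X 1 ^ s) := by ring
    simp only [this]
    exact SZ.sub_mem (SZ.mul_mem mem_a (h2 s)) (SZ.mul_mem mem_b (h1 s))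

lemma L6 (q : ℕ) : ∀ s p : ℕ,
    (X 0 : Paux) ^ p * X 1 ^ q * X 3 ^ s + X 2 ^ p * X 1 ^ s * X 3 ^ q ∈ SZ := by
  induction q with
  | zero =>
    intro s p
    have : (X 0 : Paux) ^ p * X 1 ^ 0 * X 3 ^ s + X 2 ^ p * X 1 ^ s * X 3 ^ 0
        = X 0 ^ p * X 3 ^ s + X 2 ^ p * X 1 ^ s := by ring
    simp only [this]; exact L5 p s
  | succ q ih =>
    intro s p
    match s with
    | 0 =>
      have : (X 0 : Paux) ^ p * X 1 ^ (q+1) * X 3 ^ 0 + X 2 ^ p * X 1 ^ 0 * X 3 ^ (q+1)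
          = X 0 ^ p * X 1 ^ (q+1) + X 2 ^ p * X 3 ^ (q+1) := by ring
      simp only [this]; exact L4 p (q+1)
    | s + 1 =>
      have : (X 0 : Paux) ^ p * X 1 ^ (q+1) * X 3 ^ (s+1) + X 2 ^ p * X 1 ^ (s+1) * X 3 ^ (q+1)
          = (X 1 * X 3) * (X 0 ^ p * X 1 ^ q * X 3 ^ s + X 2 ^ p * X 1 ^ s * X 3 ^ q) := by ring
      simp only [this]; exact SZ.mul_mem mem_d (ih s p)

lemma L7 (p : ℕ) : ∀ r q s : ℕ,
    (X 0 : Paux) ^ p * X 1 ^ q * X 2 ^ r * X 3 ^ s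
      + X 0 ^ r * X 1 ^ s * X 2 ^ p * X 3 ^ q ∈ SZ := by
  induction p with
  | zero =>
    intro r q s
    have : (X 0 : Paux) ^ 0 * X 1 ^ q * X 2 ^ r * X 3 ^ s
          + X 0 ^ r * X 1 ^ s * X 2 ^ 0 * X 3 ^ q
        = X 0 ^ r * X 1 ^ s * X 3 ^ q + X 2 ^ r * X 1 ^ q * X 3 ^ s := by ring
    simp only [this]; exact L6 s q r
  | succ p ih =>
    intro r q s
    match r with
    | 0 =>
      have : (X 0 : Paux) ^ (p+1) * X 1 ^ q * X 2 ^ 0 * X 3 ^ s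
            + X 0 ^ 0 * X 1 ^ s * X 2 ^ (p+1) * X 3 ^ q
          = X 0 ^ (p+1) * X 1 ^ q * X 3 ^ s + X 2 ^ (p+1) * X 1 ^ s * X 3 ^ q := by ring
      simp only [this]; exact L6 q s (p+1)
    | r + 1 =>
      have : (X 0 : Paux) ^ (p+1) * X 1 ^ q * X 2 ^ (r+1) * X 3 ^ s
            + X 0 ^ (r+1) * X 1 ^ s * X 2 ^ (p+1) * X 3 ^ q
          = (X 0 * X 2) * (X 0 ^ p * X 1 ^ q * X 2 ^ r * X 3 ^ s
              + X 0 ^ r * X 1 ^ s * X 2 ^ p * X 3 ^ q) := by ring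
      simp only [this]; exact SZ.mul_mem mem_b (ih r q s)

lemma swap_invol : Function.Involutive swapFun := fun x => by fin_cases x <;> rfl
lemma swap_inj : Function.Injective swapFun := swap_invol.injective

lemma mapDomain_swap_swap (v : Fin 4 →₀ ℕ) :
    Finsupp.mapDomain swapFun (Finsupp.mapDomain swapFun v) = v := by
  rw [← Finsupp.mapDomain_comp, swap_invol.comp_self, Finsupp.mapDomain_id]

lemma mds0 (v : Fin 4 →₀ ℕ) : Finsupp.mapDomain swapFun v 0 = v 2 :=
  Finsupp.mapDomain_apply swap_inj v 2
lemma mds1 (v : Fin 4 →₀ ℕ) : Finsupp.mapDomain swapFun v 1 = v 3 :=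
  Finsupp.mapDomain_apply swap_inj v 3
lemma mds2 (v : Fin 4 →₀ ℕ) : Finsupp.mapDomain swapFun v 2 = v 0 :=
  Finsupp.mapDomain_apply swap_inj v 0
lemma mds3 (v : Fin 4 →₀ ℕ) : Finsupp.mapDomain swapFun v 3 = v 1 :=
  Finsupp.mapDomain_apply swap_inj v 1

lemma monomial_eq_prod (v : Fin 4 →₀ ℕ) (c : ℤ) :
    (monomial v c : Paux) = C c * (X 0 ^ v 0 * X 1 ^ v 1 * X 2 ^ v 2 * X 3 ^ v 3) := by
  rw [monomial_eq]
  congr 1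
  rw [Finsupp.prod_fintype _ _ (fun i => pow_zero (X i))]
  exact Fin.prod_univ_four _

lemma C_mem (c : ℤ) : (C c : Paux) ∈ SZ := by
  rw [eq_intCast (MvPolynomial.C : ℤ →+* Paux) c]
  exact intCast_mem SZ c

lemma mainAux : ∀ (n : ℕ) (f : Paux), f.support.card ≤ n → rename swapFun f = f → f ∈ SZ := by
  intro n
  induction n with
  | zero =>
    intro f hcard _
    have : f = 0 := support_eq_empty.mp (Finset.card_eq_zero.mp (Nat.le_zero.mp hcard))
    rw [this]; exact SZ.zero_mem
  | succ n ih =>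
    intro f hcard hf
    by_cases h0 : f = 0
    · rw [h0]; exact SZ.zero_mem
    obtain ⟨v, hv⟩ := support_nonempty.mpr h0
    set c : ℤ := coeff v f with hc
    set w : Fin 4 →₀ ℕ := Finsupp.mapDomain swapFun v with hwdef
    have hwf : coeff w f = c := by
      conv_lhs => rw [← hf]
      exact coeff_rename_mapDomain swapFun swap_inj f v
    by_cases hwv : w = v
    · -- fixed monomial
      have hv' : Finsupp.mapDomain swapFun v = v := by rw [← hwdef]; exact hwv
      have h02 : v 0 = v 2 := by rw [← mds0 v, hv']
      have h13 : v 1 = v 3 := by rw [← mds1 v, hv']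
      set g : Paux := monomial v c with hgdef
      have hgS : g ∈ SZ := by
        rw [hgdef, monomial_eq_prod]
        have key : (X 0 : Paux) ^ v 0 * X 1 ^ v 1 * X 2 ^ v 2 * X 3 ^ v 3
            = (X 0 * X 2) ^ v 0 * (X 1 * X 3) ^ v 1 := by
          rw [h02, h13]; ring
        rw [key]
        exact SZ.mul_mem (C_mem c) (SZ.mul_mem (pow_mem mem_b _) (pow_mem mem_d _))
      have hginv : rename swapFun g = g := by
        rw [hgdef, rename_monomial, ← hwdef, hwv]
      have hsub : (f - g).support ⊆ f.support.erase v := by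
        intro u hu
        have hu' : coeff u (f - g) ≠ 0 := mem_support_iff.mp hu
        have hne : u ≠ v := by
          intro h; apply hu'
          rw [h, coeff_sub, hgdef, coeff_monomial, if_pos rfl, ← hc, sub_self]
        refine Finset.mem_erase.mpr ⟨hne, mem_support_iff.mpr ?_⟩
        intro hcf
        apply hu'
        rw [coeff_sub, hcf, hgdef, coeff_monomial, if_neg (fun h => hne h.symm), sub_zero]
      have hcard' : (f - g).support.card ≤ n := by
        have h1 : (f.support.erase v).card < f.support.card := Finset.card_erase_lt_of_mem hv
        have := Finset.card_le_card hsub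
        omega
      have hfg : rename swapFun (f - g) = f - g := by rw [map_sub, hf, hginv]
      have := ih (f - g) hcard' hfg
      have heq : f = (f - g) + g := by ring
      rw [heq]; exact SZ.add_mem this hgS
    · -- orbit of size two
      set g : Paux := monomial v c + monomial w c with hgdef
      have hgS : g ∈ SZ := by
        rw [hgdef, monomial_eq_prod, monomial_eq_prod, hwdef, mds0, mds1, mds2, mds3]
        have key : (C c : Paux) * (X 0 ^ v 0 * X 1 ^ v 1 * X 2 ^ v 2 * X 3 ^ v 3)
              + C c * (X 0 ^ v 2 * X 1 ^ v 3 * X 2 ^ v 0 * X 3 ^ v 1)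
            = C c * (X 0 ^ v 0 * X 1 ^ v 1 * X 2 ^ v 2 * X 3 ^ v 3
              + X 0 ^ v 2 * X 1 ^ v 3 * X 2 ^ v 0 * X 3 ^ v 1) := by ring
        rw [key]
        exact SZ.mul_mem (C_mem c) (L7 (v 0) (v 2) (v 1) (v 3))
      have hginv : rename swapFun g = g := by
        rw [hgdef, map_add, rename_monomial, rename_monomial, ← hwdef,
          hwdef, mapDomain_swap_swap, add_comm]
      have hgv : coeff v g = c := by
        rw [hgdef, coeff_add, coeff_monomial, if_pos rfl, coeff_monomial,
          if_neg hwv, add_zero]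
      have hgw : coeff w g = c := by
        rw [hgdef, coeff_add, coeff_monomial, if_neg (fun h => hwv h.symm),
          coeff_monomial, if_pos rfl, zero_add]
      have hgu : ∀ u, u ≠ v → u ≠ w → coeff u g = 0 := by
        intro u huv huw
        rw [hgdef, coeff_add, coeff_monomial, if_neg (fun h => huv h.symm),
          coeff_monomial, if_neg (fun h => huw h.symm), add_zero]
      have hsub : (f - g).support ⊆ f.support.erase v := by
        intro u hu
        have hu' : coeff u (f - g) ≠ 0 := mem_support_iff.mp hu
        have hne : u ≠ v := by
          intro h; apply hu'; rw [h, coeff_sub, hgv, ← hc, sub_self]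
        have hnw : u ≠ w := by
          intro h; apply hu'; rw [h, coeff_sub, hgw, hwf, sub_self]
        refine Finset.mem_erase.mpr ⟨hne, mem_support_iff.mpr ?_⟩
        intro hcf
        apply hu'
        rw [coeff_sub, hcf, hgu u hne hnw, sub_zero]
      have hcard' : (f - g).support.card ≤ n := by
        have h1 : (f.support.erase v).card < f.support.card := Finset.card_erase_lt_of_mem hv
        have := Finset.card_le_card hsub
        omega
      have hfg : rename swapFun (f - g) = f - g := by rw [map_sub, hf, hginv]
      have := ih (f - g) hcard' hfg
      have heq : f = (f - g) + g := by ring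
      rw [heq]; exact SZ.add_mem this hgS

/-! ### Field-side computations -/

set_option synthInstance.maxHeartbeats 1000000 in
set_option maxHeartbeats 1000000 in
abbrev RK : Subring K := Subring.closure ({u2, u4, u5, u7} : Set K)

set_option synthInstance.maxHeartbeats 1000000 in
set_option maxHeartbeats 1000000 in
lemma hx : X1 - X2 ≠ 0 := by
  rw [X1, X2, ← map_sub]
  intro h
  rw [show (0 : K) = algebraMap (MvPolynomial (Fin 4) ℂ) K 0 by rw [map_zero]] at h
  have h2 := IsFractionRing.injective (MvPolynomial (Fin 4) ℂ) K h
  have h3 : (X 0 : MvPolynomial (Fin 4) ℂ) = X 2 := by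
    have := sub_eq_zero.mp h2; exact this
  exact (by decide : (0 : Fin 4) ≠ 2) (X_injective h3)

set_option synthInstance.maxHeartbeats 1000000 in
set_option maxHeartbeats 1000000 in
lemma two_mem : (2 : K) ∈ RK := by
  rw [show (2 : K) = 1 + 1 by norm_num]
  exact RK.add_mem RK.one_mem RK.one_mem

set_option synthInstance.maxHeartbeats 1000000 in
set_option maxHeartbeats 1000000 in
lemma u2R : u2 ∈ RK := Subring.subset_closure (by simp)
set_option synthInstance.maxHeartbeats 1000000 in
set_option maxHeartbeats 1000000 in
lemma u4R : u4 ∈ RK := Subring.subset_closure (by simp)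
set_option synthInstance.maxHeartbeats 1000000 in
set_option maxHeartbeats 1000000 in
lemma u5R : u5 ∈ RK := Subring.subset_closure (by simp)
set_option synthInstance.maxHeartbeats 1000000 in
set_option maxHeartbeats 1000000 in
lemma u7R : u7 ∈ RK := Subring.subset_closure (by simp)

set_option synthInstance.maxHeartbeats 1000000 in
set_option maxHeartbeats 1000000 in
lemma memA : X1 + X2 ∈ RK := by
  have e : X1 + X2 = 2 * u2 := by rw [u2]; field_simp
  rw [e]; exact RK.mul_mem two_mem u2R

set_option synthInstance.maxHeartbeats 1000000 in
set_option maxHeartbeats 1000000 in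
lemma memB : X1 * X2 ∈ RK := by
  have e : X1 * X2 = u2 ^ 2 - u4 := by rw [u2, u4]; field_simp; ring
  rw [e]; exact RK.sub_mem (pow_mem u2R 2) u4R

set_option synthInstance.maxHeartbeats 1000000 in
set_option maxHeartbeats 1000000 in
lemma memC : Y1 + Y2 ∈ RK := by
  have e : Y1 + Y2 = 2 * u7 := by rw [u7]; field_simp
  rw [e]; exact RK.mul_mem two_mem u7R

set_option synthInstance.maxHeartbeats 1000000 in
set_option maxHeartbeats 1000000 in
lemma memD : Y1 * Y2 ∈ RK := by
  have e : Y1 * Y2 = u7 ^ 2 - u4 * u5 ^ 2 := by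
    rw [u7, u4, u5]; field_simp [hx]; ring
  rw [e]; exact RK.sub_mem (pow_mem u7R 2) (RK.mul_mem u4R (pow_mem u5R 2))

set_option synthInstance.maxHeartbeats 1000000 in
set_option maxHeartbeats 1000000 in
lemma memE : X1 * Y1 + X2 * Y2 ∈ RK := by
  have e : X1 * Y1 + X2 * Y2 = 2 * u2 * u7 + 2 * u4 * u5 := by
    rw [u2, u4, u5, u7]; field_simp [hx]; ring
  rw [e]
  exact RK.add_mem (RK.mul_mem (RK.mul_mem two_mem u2R) u7R)
    (RK.mul_mem (RK.mul_mem two_mem u4R) u5R)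

/-- The ring homomorphism from `ℤ[X₁,Y₁,X₂,Y₂]` to `K`. -/
def Φ : Paux →+* K :=
  (algebraMap (MvPolynomial (Fin 4) ℂ) K).comp (MvPolynomial.map (Int.castRingHom ℂ))

lemma ΦX (i : Fin 4) :
    Φ (X i) = algebraMap (MvPolynomial (Fin 4) ℂ) K (MvPolynomial.X i) := by
  simp [Φ, MvPolynomial.map_X]

set_option synthInstance.maxHeartbeats 1000000 in
set_option maxHeartbeats 1000000 in
lemma Φgens : Φ '' gensAux ⊆ (RK : Set K) := by
  rintro _ ⟨g, hg, rfl⟩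
  simp only [gensAux, Set.mem_insert_iff, Set.mem_singleton_iff] at hg
  rcases hg with h | h | h | h | h <;> subst h <;>
    simp only [map_add, map_mul, ΦX]
  · exact memA
  · exact memB
  · exact memC
  · exact memD
  · exact memE

/-- If a polynomial `f ∈ ℤ[X₁,Y₁,X₂,Y₂]` is invariant under simultaneously swapping
`X₁ ↔ X₂` and `Y₁ ↔ Y₂`, then its image in `ℂ(X₁,Y₁,X₂,Y₂)` lies in the subring
generated by `u₂, u₄, u₅, u₇`. -/
theorem statement2 (f : MvPolynomial (Fin 4) ℤ)
    (hf : MvPolynomial.rename swapFun f = f) :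
    algebraMap (MvPolynomial (Fin 4) ℂ) K (MvPolynomial.map (Int.castRingHom ℂ) f) ∈
      Subring.closure ({u2, u4, u5, u7} : Set K) := by
  have hS : f ∈ SZ := mainAux f.support.card f le_rfl hf
  have hmap : Φ f ∈ Subring.map Φ SZ := Subring.mem_map.mpr ⟨f, hS, rfl⟩
  rw [RingHom.map_closure] at hmap
  exact Subring.closure_le.mpr Φgens hmap

end
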